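/- Fix d ≥ 2 and define φ : ℝ^d → ℝ^d by φ(x_1, …, x_d) = (((1+√2)x_1 + (1−√2)x_2)/(2√2), ((1−√2)x_1 + (1+√2)x_2)/(2√2), x_3, …, x_d). Then for integer vectors: (a) ‖φ(e_1 + e_2)‖ = 1, (b) ‖φ(e_i)‖ = √3/2 < 1 for i = 1, 2, and ‖φ(e_i)‖ = 1 for i ≥ 3, and (c) ‖φ(e_1 − e_2)‖ = √2 > 1 and ‖φ(2e_1)‖ = √3 > 1. Consequently, two unit-diameter balls centered at φ(x) and φ(y) for x, y ∈ ℤ^d intersect if x − y ∈ {±e_i : 1 ≤ i ≤ d} ∪ {±(e_1+e_2)}, realizing the augmented grid adjacency for these difference vectors. -/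

import Mathlib

open Real

/-- The affine map realizing the augmented grid as a unit ball graph. -/
noncomputable def augPhi (d : ℕ) (hd : 2 ≤ d) (x : EuclideanSpace ℝ (Fin d)) :
    EuclideanSpace ℝ (Fin d) := WithLp.toLp 2 fun i =>
  if (i : ℕ) = 0 then
    ((1 + Real.sqrt 2) * x ⟨0, by omega⟩ + (1 - Real.sqrt 2) * x ⟨1, by omega⟩) / (2 * Real.sqrt 2)
  else if (i : ℕ) = 1 then
    ((1 - Real.sqrt 2) * x ⟨0, by omega⟩ + (1 + Real.sqrt 2) * x ⟨1, by omega⟩) / (2 * Real.sqrt 2)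
  else x i

lemma augPhi_key_alg (a b : ℝ) :
    (((1 + Real.sqrt 2) * a + (1 - Real.sqrt 2) * b) / (2 * Real.sqrt 2)) ^ 2 +
      (((1 - Real.sqrt 2) * a + (1 + Real.sqrt 2) * b) / (2 * Real.sqrt 2)) ^ 2
      = (3 * a ^ 2 - 2 * a * b + 3 * b ^ 2) / 4 := by
  have hs : Real.sqrt 2 ^ 2 = 2 := Real.sq_sqrt (by norm_num)
  have hs0 : Real.sqrt 2 ≠ 0 := by positivity
  field_simp
  linear_combination (-4*a^2 - 4*b^2 - 8*a*b) * hs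

lemma norm_augPhi (d : ℕ) (hd : 2 ≤ d) (x : EuclideanSpace ℝ (Fin d))
    (hx : ∀ k : Fin d, (k : ℕ) ≠ 0 → (k : ℕ) ≠ 1 → x k = 0) :
    ‖augPhi d hd x‖ = Real.sqrt ((3 * (x ⟨0, by omega⟩) ^ 2
      - 2 * x ⟨0, by omega⟩ * x ⟨1, by omega⟩ + 3 * (x ⟨1, by omega⟩) ^ 2) / 4) := by
  rw [EuclideanSpace.norm_eq]
  congr 1
  rw [Finset.sum_eq_add_of_mem (⟨0, by omega⟩ : Fin d) (⟨1, by omega⟩ : Fin d)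
    (Finset.mem_univ _) (Finset.mem_univ _) (by simp [Fin.ext_iff])
    (by
      intro c _ hc
      have h0 : (c : ℕ) ≠ 0 := fun h => hc.1 (Fin.ext h)
      have h1 : (c : ℕ) ≠ 1 := fun h => hc.2 (Fin.ext h)
      simp [augPhi, h0, h1, hx c h0 h1])]
  simp only [augPhi, Real.norm_eq_abs, sq_abs]
  norm_num
  exact augPhi_key_alg _ _

lemma augPhi_sub (d : ℕ) (hd : 2 ≤ d) (x y : EuclideanSpace ℝ (Fin d)) :
    augPhi d hd (x - y) = augPhi d hd x - augPhi d hd y := by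
  ext k
  simp only [augPhi, PiLp.sub_apply, PiLp.toLp_apply]
  split_ifs <;> ring

lemma augPhi_neg (d : ℕ) (hd : 2 ≤ d) (x : EuclideanSpace ℝ (Fin d)) :
    augPhi d hd (-x) = -augPhi d hd x := by
  ext k
  simp only [augPhi, PiLp.neg_apply, PiLp.toLp_apply]
  split_ifs <;> ring

/-- Norm computations for `augPhi` on integer difference vectors, and the resulting
intersection of unit-diameter balls realizing the augmented grid adjacency. -/
theorem augPhi_realizes_augmented_grid (d : ℕ) (hd : 2 ≤ d) :
    let e : Fin d → EuclideanSpace ℝ (Fin d) := fun i => EuclideanSpace.single i (1 : ℝ)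
    let i0 : Fin d := ⟨0, by omega⟩
    let i1 : Fin d := ⟨1, by omega⟩
    (‖augPhi d hd (e i0 + e i1)‖ = 1) ∧
    (‖augPhi d hd (e i0)‖ = Real.sqrt 3 / 2) ∧
    (‖augPhi d hd (e i1)‖ = Real.sqrt 3 / 2) ∧ (Real.sqrt 3 / 2 < 1) ∧
    (∀ i : Fin d, 2 ≤ (i : ℕ) → ‖augPhi d hd (e i)‖ = 1) ∧
    (‖augPhi d hd (e i0 - e i1)‖ = Real.sqrt 2) ∧ (1 < Real.sqrt 2) ∧
    (‖augPhi d hd ((2 : ℝ) • e i0)‖ = Real.sqrt 3) ∧ (1 < Real.sqrt 3) ∧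
    (∀ x y : Fin d → ℤ,
      ((∃ i : Fin d, x - y = Pi.single i 1 ∨ x - y = -Pi.single i 1) ∨
        x - y = Pi.single i0 1 + Pi.single i1 1 ∨
        x - y = -(Pi.single i0 1 + Pi.single i1 1)) →
      (Metric.closedBall (augPhi d hd (WithLp.toLp 2 fun i => (x i : ℝ))) (1 / 2) ∩
        Metric.closedBall (augPhi d hd (WithLp.toLp 2 fun i => (y i : ℝ))) (1 / 2)).Nonempty) := by
  intro e i0 i1
  have hne : i0 ≠ i1 := by simp [i0, i1, Fin.ext_iff]
  have hs2 : Real.sqrt 2 ^ 2 = 2 := Real.sq_sqrt (by norm_num)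
  have hs3 : Real.sqrt 3 ^ 2 = 3 := Real.sq_sqrt (by norm_num)
  have hlt2 : (1:ℝ) < Real.sqrt 2 := by nlinarith [Real.sqrt_nonneg 2]
  have hlt3 : (1:ℝ) < Real.sqrt 3 := by nlinarith [Real.sqrt_nonneg 3]
  have hlt34 : Real.sqrt 3 / 2 < 1 := by nlinarith [Real.sqrt_nonneg 3]
  have ha0 : (e i0 : EuclideanSpace ℝ (Fin d)) i0 = 1 := by
    simp [e, EuclideanSpace.single_apply]
  have ha1 : (e i0 : EuclideanSpace ℝ (Fin d)) i1 = 0 := by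
    simp [e, EuclideanSpace.single_apply, hne.symm]
  have hb0 : (e i1 : EuclideanSpace ℝ (Fin d)) i0 = 0 := by
    simp [e, EuclideanSpace.single_apply, hne]
  have hb1 : (e i1 : EuclideanSpace ℝ (Fin d)) i1 = 1 := by
    simp [e, EuclideanSpace.single_apply]
  have hsupp : ∀ j : Fin d, (j:ℕ) ≤ 1 → ∀ k : Fin d, (k : ℕ) ≠ 0 → (k : ℕ) ≠ 1 →
      (e j : EuclideanSpace ℝ (Fin d)) k = 0 := by
    intro j hj k hk0 hk1
    have : k ≠ j := by simp [Fin.ext_iff]; omega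
    simp [e, EuclideanSpace.single_apply, this]
  have n1 : ‖augPhi d hd (e i0 + e i1)‖ = 1 := by
    rw [norm_augPhi d hd _ (by
      intro k hk0 hk1
      simp [PiLp.add_apply, hsupp i0 (by simp [i0]) k hk0 hk1, hsupp i1 (by simp [i1]) k hk0 hk1])]
    simp only [PiLp.add_apply]
    rw [show (⟨0, by omega⟩ : Fin d) = i0 from rfl, show (⟨1, by omega⟩ : Fin d) = i1 from rfl,
      ha0, ha1, hb0, hb1]
    norm_num
  have n2 : ‖augPhi d hd (e i0)‖ = Real.sqrt 3 / 2 := by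
    rw [norm_augPhi d hd _ (fun k => hsupp i0 (by simp [i0]) k)]
    rw [show (⟨0, by omega⟩ : Fin d) = i0 from rfl, show (⟨1, by omega⟩ : Fin d) = i1 from rfl,
      ha0, ha1]
    rw [show (3 * (1:ℝ) ^ 2 - 2 * 1 * 0 + 3 * 0 ^ 2) / 4 = (Real.sqrt 3 / 2) ^ 2 by
      rw [div_pow, hs3]; norm_num]
    exact Real.sqrt_sq (by positivity)
  have n3 : ‖augPhi d hd (e i1)‖ = Real.sqrt 3 / 2 := by
    rw [norm_augPhi d hd _ (fun k => hsupp i1 (by simp [i1]) k)]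
    rw [show (⟨0, by omega⟩ : Fin d) = i0 from rfl, show (⟨1, by omega⟩ : Fin d) = i1 from rfl,
      hb0, hb1]
    rw [show (3 * (0:ℝ) ^ 2 - 2 * 0 * 1 + 3 * 1 ^ 2) / 4 = (Real.sqrt 3 / 2) ^ 2 by
      rw [div_pow, hs3]; norm_num]
    exact Real.sqrt_sq (by positivity)
  have nhi : ∀ i : Fin d, 2 ≤ (i : ℕ) → ‖augPhi d hd (e i)‖ = 1 := by
    intro i hi
    have heq : augPhi d hd (e i) = e i := by
      ext k
      simp only [augPhi, PiLp.toLp_apply]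
      have h0 : (⟨0, by omega⟩ : Fin d) ≠ i := by simp [Fin.ext_iff]; omega
      have h1 : (⟨1, by omega⟩ : Fin d) ≠ i := by simp [Fin.ext_iff]; omega
      split_ifs with hk0 hk1
      · have hk : k ≠ i := by simp [Fin.ext_iff]; omega
        simp [e, EuclideanSpace.single_apply, h0, h1, hk]
      · have hk : k ≠ i := by simp [Fin.ext_iff]; omega
        simp [e, EuclideanSpace.single_apply, h0, h1, hk]
      · rfl
    rw [heq]
    simp [e, EuclideanSpace.norm_single]
  have n4 : ‖augPhi d hd (e i0 - e i1)‖ = Real.sqrt 2 := by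
    rw [norm_augPhi d hd _ (by
      intro k hk0 hk1
      simp [PiLp.sub_apply, hsupp i0 (by simp [i0]) k hk0 hk1, hsupp i1 (by simp [i1]) k hk0 hk1])]
    simp only [PiLp.sub_apply]
    rw [show (⟨0, by omega⟩ : Fin d) = i0 from rfl, show (⟨1, by omega⟩ : Fin d) = i1 from rfl,
      ha0, ha1, hb0, hb1]
    norm_num
  have n5 : ‖augPhi d hd ((2 : ℝ) • e i0)‖ = Real.sqrt 3 := by
    rw [norm_augPhi d hd _ (by
      intro k hk0 hk1
      simp [PiLp.smul_apply, hsupp i0 (by simp [i0]) k hk0 hk1])]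
    simp only [PiLp.smul_apply, smul_eq_mul]
    rw [show (⟨0, by omega⟩ : Fin d) = i0 from rfl, show (⟨1, by omega⟩ : Fin d) = i1 from rfl,
      ha0, ha1]
    norm_num
  refine ⟨n1, n2, n3, hlt34, nhi, n4, hlt2, n5, hlt3, ?_⟩
  intro x y h
  have hcast : ∀ j : Fin d,
      (WithLp.toLp 2 (fun i => ((Pi.single j 1 : Fin d → ℤ) i : ℝ)) : EuclideanSpace ℝ (Fin d)) = e j := by
    intro j
    ext i
    simp [e, Pi.single_apply, EuclideanSpace.single_apply, apply_ite (fun z : ℤ => (z : ℝ))]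
  have hkey : dist (augPhi d hd (WithLp.toLp 2 fun i => (x i : ℝ))) (augPhi d hd (WithLp.toLp 2 fun i => (y i : ℝ))) ≤ 1 := by
    rw [dist_eq_norm, ← augPhi_sub]
    have hXY : (WithLp.toLp 2 (fun i => (x i : ℝ)) - WithLp.toLp 2 (fun i => (y i : ℝ)) : EuclideanSpace ℝ (Fin d))
        = WithLp.toLp 2 (fun i => ((x - y) i : ℝ)) := by
      ext i
      simp [PiLp.sub_apply]
    rw [hXY]
    rcases h with ⟨i, hi | hi⟩ | hi | hi
    · rw [hi, hcast]
      rcases Nat.lt_or_ge (i : ℕ) 2 with h2 | h2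
      · have : i = i0 ∨ i = i1 := by
          rcases (by omega : (i : ℕ) = 0 ∨ (i : ℕ) = 1) with h | h
          · exact Or.inl (Fin.ext h)
          · exact Or.inr (Fin.ext h)
        rcases this with rfl | rfl
        · rw [n2]; linarith
        · rw [n3]; linarith
      · rw [nhi i h2]
    · rw [hi]
      have hneg : (WithLp.toLp 2 (fun i' => ((-Pi.single i 1 : Fin d → ℤ) i' : ℝ)) : EuclideanSpace ℝ (Fin d))
          = -WithLp.toLp 2 (fun i' => ((Pi.single i 1 : Fin d → ℤ) i' : ℝ)) := by
        ext i'
        simp [PiLp.neg_apply]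
      rw [hneg, augPhi_neg, norm_neg, hcast]
      rcases Nat.lt_or_ge (i : ℕ) 2 with h2 | h2
      · have : i = i0 ∨ i = i1 := by
          rcases (by omega : (i : ℕ) = 0 ∨ (i : ℕ) = 1) with h | h
          · exact Or.inl (Fin.ext h)
          · exact Or.inr (Fin.ext h)
        rcases this with rfl | rfl
        · rw [n2]; linarith
        · rw [n3]; linarith
      · rw [nhi i h2]
    · rw [hi]
      have hadd : (WithLp.toLp 2 (fun i' => ((Pi.single i0 1 + Pi.single i1 1 : Fin d → ℤ) i' : ℝ)) :
          EuclideanSpace ℝ (Fin d)) = e i0 + e i1 := by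
        ext i'
        have h0 := congrArg (fun v : EuclideanSpace ℝ (Fin d) => v i') (hcast i0)
        have h1 := congrArg (fun v : EuclideanSpace ℝ (Fin d) => v i') (hcast i1)
        simp only [PiLp.toLp_apply] at h0 h1
        simp only [PiLp.add_apply, Pi.add_apply, PiLp.toLp_apply]
        push_cast
        rw [← h0, ← h1]
      rw [hadd, n1]
    · rw [hi]
      have hadd : (WithLp.toLp 2 (fun i' => ((-(Pi.single i0 1 + Pi.single i1 1) : Fin d → ℤ) i' : ℝ)) :
          EuclideanSpace ℝ (Fin d)) = -(e i0 + e i1) := by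
        ext i'
        have h0 := congrArg (fun v : EuclideanSpace ℝ (Fin d) => v i') (hcast i0)
        have h1 := congrArg (fun v : EuclideanSpace ℝ (Fin d) => v i') (hcast i1)
        simp only [PiLp.toLp_apply] at h0 h1
        simp only [PiLp.neg_apply, PiLp.add_apply, Pi.neg_apply, Pi.add_apply, PiLp.toLp_apply]
        push_cast
        rw [← h0, ← h1]
      rw [hadd, augPhi_neg, norm_neg, n1]
  refine ⟨midpoint ℝ (augPhi d hd (WithLp.toLp 2 fun i => (x i : ℝ))) (augPhi d hd (WithLp.toLp 2 fun i => (y i : ℝ))), ?_, ?_⟩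
  · rw [Metric.mem_closedBall, dist_midpoint_left]
    rw [Real.norm_ofNat]
    linarith
  · rw [Metric.mem_closedBall, dist_midpoint_right]
    rw [Real.norm_ofNat]
    linarith
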